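/- arXiv:1705.10997 — 3 statements merged into one kernel-verified Lean document; each statement's English description precedes it below -/
import Mathlib

section
/- Let f : ℝ → [0,∞) be even, C¹ on (0,∞), with f(0)=0, f increasing on [0,∞), and suppose f′ is decreasing on [γ, ∞) for some γ > 0 and there exists ε₀ ∈ (0,1) with y f′(y) ≤ (1 − ε₀) f(y) for all y ≥ γ. Then for all x ≥ 2γ and all y ∈ [γ, x/2]: f(x) − f(y) − f(x − y) ≤ −ε₀ f(y). Equivalently, J(x−y)J(y)/J(x) ≤ e^{−ε₀ f(y)} where J = e^{−f}. -/
open Real Filter Set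

theorem sub_le_deriv_mul_sub_of_antitoneOn_deriv {f : ℝ → ℝ} {a b c : ℝ}
    (hf : DifferentiableOn ℝ f (Ici a)) (hf' : AntitoneOn (deriv f) (Ici a))
    (hab : a ≤ b) (hbc : b ≤ c) : f c - f b ≤ deriv f a * (c - b) := by
  refine (convex_Ici a).image_sub_le_mul_sub_of_deriv_le hf.continuousOn ?_ ?_ b hab c
    (hab.trans hbc) hbc
  · exact hf.mono interior_subset
  · rw [interior_Ici]
    exact fun x hx => hf' self_mem_Ici (mem_Ici.2 hx.le) (le_of_lt hx)

theorem stmt6_general (f : ℝ → ℝ)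
    (hf : ContDiffOn ℝ 1 f (Set.Ioi 0))
    (γ : ℝ) (hγ : 0 < γ) (hderiv_dec : AntitoneOn (deriv f) (Set.Ici γ))
    (ε₀ : ℝ)
    (hsub : ∀ y : ℝ, γ ≤ y → y * deriv f y ≤ (1 - ε₀) * f y) :
    ∀ x : ℝ, 2*γ ≤ x → ∀ y ∈ Set.Icc γ (x/2),
      f x - f y - f (x - y) ≤ -ε₀ * f y := by
  rintro x - y ⟨hγy, hyx⟩
  have hdiff : DifferentiableOn ℝ f (Ici y) :=
    (hf.differentiableOn one_ne_zero).mono fun z hz => hγ.trans_le (hγy.trans hz)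
  have hincr : f x - f (x - y) ≤ deriv f y * (x - (x - y)) :=
    sub_le_deriv_mul_sub_of_antitoneOn_deriv hdiff
      (hderiv_dec.mono (Ici_subset_Ici.2 hγy)) (by linarith) (by linarith)
  linarith [hsub y hγy]

/-- Sub-additivity-type estimate for fat-tailed kernels: if `f'` is
decreasing on `[γ,∞)` and `y f'(y) ≤ (1−ε₀) f(y)` for `y ≥ γ`, then for `x ≥ 2γ` and
`y ∈ [γ, x/2]`, `f(x) − f(y) − f(x−y) ≤ −ε₀ f(y)`. -/
theorem stmt6 (f : ℝ → ℝ) (heven : ∀ x, f (-x) = f x) (hnn : ∀ x, 0 ≤ f x)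
    (hf : ContDiffOn ℝ 1 f (Set.Ioi 0)) (hf0 : f 0 = 0)
    (hmono : MonotoneOn f (Set.Ici 0))
    (γ : ℝ) (hγ : 0 < γ) (hderiv_dec : AntitoneOn (deriv f) (Set.Ici γ))
    (ε₀ : ℝ) (hε₀ : ε₀ ∈ Set.Ioo (0:ℝ) 1)
    (hsub : ∀ y : ℝ, γ ≤ y → y * deriv f y ≤ (1 - ε₀) * f y) :
    ∀ x : ℝ, 2*γ ≤ x → ∀ y ∈ Set.Icc γ (x/2),
      f x - f y - f (x - y) ≤ -ε₀ * f y :=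
  stmt6_general f hf γ hγ hderiv_dec ε₀ hsub
end

section
/- Let θ : [0,∞) → [0,∞) be bounded and continuous, and let J, φ : [0,∞) × ℝ → ℝ with φ(t,x) = 1/(1 + e^{−t}/J(x)) and J : ℝ → (0,1]. Suppose −θ(t)φ(t,x) ≤ (J*φ − φ)(t,x) ≤ θ(t)φ(t,x) for all t > 0, x ∈ ℝ, where (J*φ)(t,x) = ∫ J(x−y)φ(t,y)dy. Define overφ(t,x) = 2 C̄ φ(t,x) exp(∫₀ᵗ θ(s)ds) for a constant C̄ ≥ 1. Then overφ is a supersolution of ∂ₜ n = J*n − n + n(1−n), i.e. ∂ₜ overφ − (J*overφ − overφ) − overφ(1 − overφ) ≥ 0 for all t > 0, x ∈ ℝ. -/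
open Real Filter Set MeasureTheory

/-! Since `φ` solves the logistic equation `∂ₜφ = φ(1 - φ)` and the factor
`m(t) = 2 C̄ exp(∫₀ᵗ θ)` solves `m' = θ m` with `m ≥ 1`, the product `Φ = m φ` satisfies
`∂ₜΦ = Φ(1 - φ) + θΦ ≥ Φ(1 - Φ) + θΦ`, while the upper sandwich bound scales to
`J*Φ - Φ = m (J*φ - φ) ≤ θΦ`. -/

theorem hasDerivAt_one_div_one_add_exp_neg_div {a : ℝ} (ha : 0 < a) (t : ℝ) :
    HasDerivAt (fun s => 1 / (1 + exp (-s) / a))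
      (1 / (1 + exp (-t) / a) * (1 - 1 / (1 + exp (-t) / a))) t := by
  have hden : 1 + exp (-t) / a ≠ 0 := by positivity
  have hexp : HasDerivAt (fun s => exp (-s)) (-exp (-t)) t := by
    simpa using (hasDerivAt_neg t).exp
  simp only [one_div]
  refine (((hexp.div_const a).const_add 1).inv hden).congr_deriv ?_
  field_simp
  ring

theorem hasDerivAt_exp_integral {θ : ℝ → ℝ} (hθ : Continuous θ) (a t : ℝ) :
    HasDerivAt (fun s => exp (∫ u in a..s, θ u)) (θ t * exp (∫ u in a..t, θ u)) t := by
  have hI : HasDerivAt (fun s => ∫ u in a..s, θ u) (θ t) t :=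
    intervalIntegral.integral_hasDerivAt_right (hθ.intervalIntegrable a t)
      (hθ.stronglyMeasurableAtFilter _ _) hθ.continuousAt
  simpa [mul_comm] using hI.exp

theorem stmt10_general (θ : ℝ → ℝ) (hθc : Continuous θ)
    (hθnn : ∀ t, 0 ≤ θ t)
    (J : ℝ → ℝ) (hJ : ∀ x, J x ∈ Set.Ioc (0:ℝ) 1)
    (φ : ℝ → ℝ → ℝ) (hφ : ∀ t x, φ t x = 1 / (1 + Real.exp (-t) / J x))
    (hsand : ∀ t : ℝ, 0 < t → ∀ x : ℝ,
      -(θ t * φ t x) ≤ (∫ y, J (x - y) * φ t y) - φ t x ∧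
      (∫ y, J (x - y) * φ t y) - φ t x ≤ θ t * φ t x)
    (Cbar : ℝ) (hC : 1 ≤ Cbar)
    (Φ : ℝ → ℝ → ℝ)
    (hΦ : ∀ t x, Φ t x = 2 * Cbar * φ t x * Real.exp (∫ s in (0:ℝ)..t, θ s)) :
    ∀ t : ℝ, 0 < t → ∀ x : ℝ,
      0 ≤ deriv (fun s => Φ s x) t - ((∫ y, J (x - y) * Φ t y) - Φ t x)
          - Φ t x * (1 - Φ t x) := by
  intro t ht x
  set m := 2 * Cbar * exp (∫ s in (0:ℝ)..t, θ s)
  have hΦm : ∀ y, Φ t y = m * φ t y := fun y => by rw [hΦ]; ring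
  have hm_ge : 1 ≤ m := by
    have : 1 ≤ exp (∫ s in (0:ℝ)..t, θ s) :=
      one_le_exp (intervalIntegral.integral_nonneg ht.le fun u _ => hθnn u)
    nlinarith
  have hφ_pos : 0 < φ t x := by rw [hφ]; have := (hJ x).1; positivity
  have hφ_deriv : HasDerivAt (fun s => φ s x) (φ t x * (1 - φ t x)) t := by
    simpa only [hφ] using hasDerivAt_one_div_one_add_exp_neg_div (hJ x).1 t
  have hΦ_deriv : HasDerivAt (fun s => Φ s x) (Φ t x * (1 - φ t x) + θ t * Φ t x) t := by
    simp only [hΦ]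
    refine ((hφ_deriv.const_mul (2 * Cbar)).mul (hasDerivAt_exp_integral hθc 0 t)).congr_deriv ?_
    ring
  have hconv : ∫ y, J (x - y) * Φ t y = m * ∫ y, J (x - y) * φ t y := by
    rw [← integral_const_mul]
    congr 1 with y
    rw [hΦm]
    ring
  have hdiffusion : (∫ y, J (x - y) * Φ t y) - Φ t x ≤ θ t * Φ t x := by
    rw [hconv, hΦm]
    nlinarith [(hsand t ht x).2]
  have hreaction : Φ t x * (1 - Φ t x) ≤ Φ t x * (1 - φ t x) := by
    rw [hΦm]
    nlinarith [mul_le_mul_of_nonneg_right hm_ge hφ_pos.le]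
  rw [hΦ_deriv.deriv]
  linarith

/-- If `φ(t,x) = 1/(1+e^{−t}/J(x))` satisfies the sandwich
`−θφ ≤ J*φ − φ ≤ θφ`, then `Φ(t,x) = 2 C̄ φ(t,x) exp(∫₀ᵗ θ)` with `C̄ ≥ 1` is a
supersolution of `∂ₜ n = J*n − n + n(1−n)`. -/
theorem stmt10 (θ : ℝ → ℝ) (hθc : Continuous θ) (hθbd : ∃ C : ℝ, ∀ t, |θ t| ≤ C)
    (hθnn : ∀ t, 0 ≤ θ t)
    (J : ℝ → ℝ) (hJ : ∀ x, J x ∈ Set.Ioc (0:ℝ) 1) (hJint : Integrable J)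
    (φ : ℝ → ℝ → ℝ) (hφ : ∀ t x, φ t x = 1 / (1 + Real.exp (-t) / J x))
    (hsand : ∀ t : ℝ, 0 < t → ∀ x : ℝ,
      -(θ t * φ t x) ≤ (∫ y, J (x - y) * φ t y) - φ t x ∧
      (∫ y, J (x - y) * φ t y) - φ t x ≤ θ t * φ t x)
    (Cbar : ℝ) (hC : 1 ≤ Cbar)
    (Φ : ℝ → ℝ → ℝ)
    (hΦ : ∀ t x, Φ t x = 2 * Cbar * φ t x * Real.exp (∫ s in (0:ℝ)..t, θ s)) :
    ∀ t : ℝ, 0 < t → ∀ x : ℝ,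
      0 ≤ deriv (fun s => Φ s x) t - ((∫ y, J (x - y) * Φ t y) - Φ t x)
          - Φ t x * (1 - Φ t x) :=
  stmt10_general θ hθc hθnn J hJ φ hφ hsand Cbar hC Φ hΦ
end

section
/- Let J : ℝ → (0,∞) be even with ∫_ℝ J = 1, let f = −ln J, and let A ∈ (0,1) be such that r := ∫_ℝ e^{A f(|h|)} J(h) dh < ∞. Suppose u⁰ : ℝ → ℝ satisfies u⁰(x+h) − u⁰(x) ≥ −A f(|h|) for all x, h. Define s(t,x) = u⁰(x) − r t and let ψ_ε⁻¹(h) = sign(h) f⁻¹(ε f(|h|)). Then for every ε > 0, t ≥ 0, x ∈ ℝ: ∫_ℝ exp(−(1/ε)(s(t, x − ψ_ε⁻¹(h)) − s(t,x))) J(h) dh ≤ r, and hence ∂ₜ s + ∫_ℝ exp(−(1/ε)(s(t, x − ψ_ε⁻¹(h)) − s(t,x))) J(h) dh ≤ 0. -/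
open Real Filter Set MeasureTheory

/-! Writing `d = ψ_ε⁻¹(h)`, the rescaling is built so that `f |d| = ε f |h|`. The increment bound
on `u⁰` at step `-d` then gives `-(u⁰(x - d) - u⁰ x) / ε ≤ A f |h|`, so the integrand is dominated
by `e^{A f(|h|)} J(h)`, whose integral is `r`; the time derivative of `s` is `-r`. -/

lemma Real.abs_sign_of_ne_zero {h : ℝ} (hh : h ≠ 0) : |Real.sign h| = 1 := by
  rcases Real.sign_apply_eq_of_ne_zero h hh with hs | hs <;> simp [hs]

lemma apply_abs_sign_mul_eq {f g : ℝ → ℝ} (hfg : ∀ y, 0 ≤ y → f (g y) = y)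
    (hg : ∀ y, 0 ≤ y → 0 ≤ g y) {h y : ℝ} (hh : h ≠ 0) (hy : 0 ≤ y) :
    f |Real.sign h * g y| = y := by
  rw [abs_mul, Real.abs_sign_of_ne_zero hh, one_mul, abs_of_nonneg (hg y hy), hfg y hy]

lemma neg_inv_mul_sub_le_of_increment_bound {u f : ℝ → ℝ} {A ε c : ℝ}
    (hu : ∀ x h, -(A * f |h|) ≤ u (x + h) - u x) (hε : 0 < ε) {x d : ℝ}
    (hd : f |d| = ε * c) : -(1 / ε) * (u (x - d) - u x) ≤ A * c := by
  have hstep := hu x (-d)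
  rw [abs_neg, hd, ← sub_eq_add_neg] at hstep
  calc -(1 / ε) * (u (x - d) - u x) = -(u (x - d) - u x) / ε := by ring
    _ ≤ A * (ε * c) / ε := by gcongr; linarith
    _ = A * c := by field_simp

theorem stmt15_general (J f finv : ℝ → ℝ) (hJpos : ∀ h, 0 < J h) (hJle1 : ∀ h, J h ≤ 1)
    (hf : ∀ h, f h = -Real.log (J h))
    (A r : ℝ)
    (hr : r = ∫ h, Real.exp (A * f |h|) * J h)
    (hint : Integrable (fun h => Real.exp (A * f |h|) * J h))
    (u0 : ℝ → ℝ) (hu0 : ∀ x h : ℝ, -(A * f |h|) ≤ u0 (x + h) - u0 x)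
    (hright : ∀ y : ℝ, 0 ≤ y → f (finv y) = y)
    (hinvnn : ∀ y : ℝ, 0 ≤ y → 0 ≤ finv y)
    (ψinv : ℝ → ℝ → ℝ)
    (hψ : ∀ ε h : ℝ, ψinv ε h = Real.sign h * finv (ε * f |h|)) :
    ∀ ε : ℝ, 0 < ε → ∀ t : ℝ, 0 ≤ t → ∀ x : ℝ,
      (∫ h, Real.exp (-(1/ε) *
          ((u0 (x - ψinv ε h) - r*t) - (u0 x - r*t))) * J h) ≤ r ∧
      deriv (fun s => u0 x - r*s) t +
        (∫ h, Real.exp (-(1/ε) *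
          ((u0 (x - ψinv ε h) - r*t) - (u0 x - r*t))) * J h) ≤ 0 := by
  intro ε hε t _ x
  have hf_nonneg (h : ℝ) : 0 ≤ f h :=
    hf h ▸ neg_nonneg.2 (Real.log_nonpos (hJpos h).le (hJle1 h))
  have hexponent (h : ℝ) : -(1 / ε) * (u0 (x - ψinv ε h) - u0 x) ≤ A * f |h| := by
    rcases eq_or_ne h 0 with rfl | hh
    · -- the shift vanishes, and `hu0 x 0` says `0 ≤ A * f 0`
      simpa [hψ] using hu0 x 0
    · refine neg_inv_mul_sub_le_of_increment_bound hu0 hε ?_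
      rw [hψ]
      exact apply_abs_sign_mul_eq hright hinvnn hh (mul_nonneg hε.le (hf_nonneg _))
  have hintegral : (∫ h, Real.exp (-(1/ε) *
      ((u0 (x - ψinv ε h) - r*t) - (u0 x - r*t))) * J h) ≤ r := by
    simp_rw [sub_sub_sub_cancel_right]
    exact hr ▸ integral_mono_of_nonneg (.of_forall fun h => mul_nonneg (exp_nonneg _) (hJpos h).le)
      hint (.of_forall fun h => mul_le_mul_of_nonneg_right (exp_le_exp.2 (hexponent h)) (hJpos h).le)
  have hderiv : deriv (fun s => u0 x - r*s) t = -r :=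
    (((hasDerivAt_id t).const_mul r).const_sub (u0 x)).deriv.trans (by ring)
  exact ⟨hintegral, by linarith⟩

/-- `s(t,x) = u⁰(x) − rt` with `r = ∫ e^{A f(|h|)} J(h) dh` is a subsolution:
the integral term is bounded by `r` and `∂ₜ s + ∫ exp(−(s(t,x−ψ_ε⁻¹(h))−s(t,x))/ε) J ≤ 0`. -/
theorem stmt15 (J f finv : ℝ → ℝ) (hJpos : ∀ h, 0 < J h) (hJle1 : ∀ h, J h ≤ 1)
    (heven : ∀ h, J (-h) = J h) (hJ1 : ∫ h, J h = 1)
    (hf : ∀ h, f h = -Real.log (J h))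
    (A r : ℝ) (hA : A ∈ Set.Ioo (0:ℝ) 1)
    (hr : r = ∫ h, Real.exp (A * f |h|) * J h)
    (hint : Integrable (fun h => Real.exp (A * f |h|) * J h))
    (u0 : ℝ → ℝ) (hu0 : ∀ x h : ℝ, -(A * f |h|) ≤ u0 (x + h) - u0 x)
    (hleft : ∀ s : ℝ, 0 ≤ s → finv (f s) = s)
    (hright : ∀ y : ℝ, 0 ≤ y → f (finv y) = y)
    (hinvnn : ∀ y : ℝ, 0 ≤ y → 0 ≤ finv y)
    (ψinv : ℝ → ℝ → ℝ)
    (hψ : ∀ ε h : ℝ, ψinv ε h = Real.sign h * finv (ε * f |h|)) :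
    ∀ ε : ℝ, 0 < ε → ∀ t : ℝ, 0 ≤ t → ∀ x : ℝ,
      (∫ h, Real.exp (-(1/ε) *
          ((u0 (x - ψinv ε h) - r*t) - (u0 x - r*t))) * J h) ≤ r ∧
      deriv (fun s => u0 x - r*s) t +
        (∫ h, Real.exp (-(1/ε) *
          ((u0 (x - ψinv ε h) - r*t) - (u0 x - r*t))) * J h) ≤ 0 :=
  stmt15_general J f finv hJpos hJle1 hf A r hr hint u0 hu0 hright hinvnn ψinv hψ
end
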